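/- Let $\Delta > 1$, $\nu \ge 1$ be integers and $R_0(t;\nu)$ as above. For real $z > 1$ define $f_6^*(z,\nu) = \tfrac{1}{2}(-z)^{\nu}\sum_{t=\nu+1}^{\infty} z^{-t}\,\frac{d^2}{dt^2}R_0(t;\nu)^3$. Then $f_6^*(z,\nu) = 6\alpha^*(z;\nu)\,\mathrm{Li}_5(1/z) + 3\beta^*(z;\nu)\,\mathrm{Li}_4(1/z) + \gamma^*(z;\nu)\,\mathrm{Li}_3(1/z) - \xi^*(z;\nu)$, where $\xi^*(z;\nu) = (-z)^{\nu}\sum_{k=0}^{\nu\Delta}z^k\sum_{t=1}^{k+\nu}z^{-t}\big(6\alpha^*_{\nu,k}t^{-5}+3\beta^*_{\nu,k}t^{-4}+\gamma^*_{\nu,k}t^{-3}\big)$. -/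

import Mathlib

/-- The polylogarithm `Li n w = ∑_{t ≥ 1} wᵗ t⁻ⁿ`. -/
noncomputable def Li (n : ℕ) (w : ℝ) : ℝ := ∑' t : ℕ, w ^ (t + 1) / ((t + 1 : ℕ) : ℝ) ^ n

/-!
On `t > 0` the function `R₀³` coincides with its partial fraction expansion, so its second
derivative there is the termwise second derivative, a finite combination of the functions
`(t + k)⁻ᵐ`, `m = 3, 4, 5`. Against the weights `z⁻ᵗ`, `t > ν`, each of these sums to
`zᵏ` times a tail of the polylogarithm series `Li m (1/z)`, namely `Li m (1/z)` minus its
first `k + ν` terms; collecting the `Li` parts gives `α*, β*, γ*` and the partial sums give `ξ*`.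
-/

open Finset

lemma summable_Li_series (n : ℕ) {w : ℝ} (hw : |w| < 1) :
    Summable fun t : ℕ => w ^ (t + 1) / ((t + 1 : ℕ) : ℝ) ^ n := by
  refine Summable.of_norm_bounded ((summable_geometric_of_lt_one (abs_nonneg w) hw).mul_left |w|)
    fun t => ?_
  have hone : (1 : ℝ) ≤ ((t + 1 : ℕ) : ℝ) ^ n := one_le_pow₀ (by simp)
  rw [norm_div, norm_pow, Real.norm_eq_abs, norm_pow, Real.norm_natCast, pow_succ']
  exact div_le_self (by positivity) hone

lemma hasSum_Li_tail (n j : ℕ) {w : ℝ} (hw : |w| < 1) :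
    HasSum (fun i : ℕ => w ^ (i + j + 1) / ((i + j + 1 : ℕ) : ℝ) ^ n)
      (Li n w - ∑ t ∈ Icc 1 j, w ^ t / (t : ℝ) ^ n) := by
  have hsum := (summable_Li_series n hw).hasSum
  rw [← hasSum_nat_add_iff' j, range_eq_Ico,
    sum_Ico_add' (fun t : ℕ => w ^ t / (t : ℝ) ^ n) 0 j 1] at hsum
  exact hsum

lemma hasSum_zpow_neg_mul_inv_pow_add (n ν k : ℕ) {z : ℝ} (hz : 1 < z) :
    HasSum (fun i : ℕ => z ^ (-((ν + 1 + i : ℕ) : ℤ)) * ((((ν + 1 + i : ℕ) : ℝ) + k) ^ n)⁻¹)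
      (z ^ k * (Li n (1 / z) - ∑ t ∈ Icc 1 (k + ν), z ^ (-(t : ℤ)) * ((t : ℝ) ^ n)⁻¹)) := by
  have hz0 : z ≠ 0 := by positivity
  have hw : |z⁻¹| < 1 := by
    rw [abs_of_pos (by positivity)]; exact inv_lt_one_of_one_lt₀ hz
  have hzpow (m : ℕ) : z ^ (-(m : ℤ)) = z⁻¹ ^ m := by rw [zpow_neg, zpow_natCast, inv_pow]
  have key := (hasSum_Li_tail n (k + ν) hw).mul_left (z ^ k)
  simp only [← hzpow, div_eq_mul_inv] at key
  rw [one_div]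
  refine key.congr_fun fun i => ?_
  rw [← mul_assoc, ← zpow_natCast z k, ← zpow_add₀ hz0]
  congr 2
  · push_cast; ring
  · push_cast; ring

lemma hasDerivAt_inv_pow_add (n : ℕ) {x c : ℝ} (h : x + c ≠ 0) :
    HasDerivAt (fun y => ((y + c) ^ n)⁻¹) (-n * ((x + c) ^ (n + 1))⁻¹) x := by
  have := (hasDerivAt_zpow (-n) (x + c) (Or.inl h)).comp_add_const x c
  rw [show -(n : ℤ) - 1 = -((n + 1 : ℕ) : ℤ) by push_cast; ring] at this
  simp only [zpow_neg, zpow_natCast] at this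
  exact this.congr_deriv (by push_cast; ring)

noncomputable def partialFractionSum (s : Finset ℕ) (n : ℕ) (a b c : ℕ → ℝ) (y : ℝ) : ℝ :=
  ∑ k ∈ s, (a k * ((y + k) ^ (n + 2))⁻¹ + b k * ((y + k) ^ (n + 1))⁻¹ + c k * ((y + k) ^ n)⁻¹)

lemma hasDerivAt_partialFractionSum (s : Finset ℕ) (n : ℕ) (a b c : ℕ → ℝ) {x : ℝ}
    (hx : 0 < x) :
    HasDerivAt (partialFractionSum s n a b c)
      (partialFractionSum s (n + 1) (fun k => -(n + 2) * a k) (fun k => -(n + 1) * b k)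
        (fun k => -n * c k) x) x := by
  unfold partialFractionSum
  refine HasDerivAt.fun_sum fun k _ => ?_
  have hk : x + k ≠ 0 := by positivity
  refine ((((hasDerivAt_inv_pow_add (n + 2) hk).const_mul (a k)).fun_add
    ((hasDerivAt_inv_pow_add (n + 1) hk).const_mul (b k))).fun_add
    ((hasDerivAt_inv_pow_add n hk).const_mul (c k))).congr_deriv ?_
  push_cast; ring

lemma deriv_deriv_partialFractionSum (s : Finset ℕ) (n : ℕ) (a b c : ℕ → ℝ) {x : ℝ}
    (hx : 0 < x) :
    deriv (deriv (partialFractionSum s n a b c)) x =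
      partialFractionSum s (n + 2) (fun k => (n + 2) * (n + 3) * a k)
        (fun k => (n + 1) * (n + 2) * b k) (fun k => n * (n + 1) * c k) x := by
  have hderiv : deriv (partialFractionSum s n a b c) =ᶠ[nhds x]
      partialFractionSum s (n + 1) (fun k => -(n + 2) * a k) (fun k => -(n + 1) * b k)
        (fun k => -n * c k) := by
    filter_upwards [Ioi_mem_nhds hx] with y hy
    exact (hasDerivAt_partialFractionSum s n a b c hy).deriv
  rw [hderiv.deriv_eq, (hasDerivAt_partialFractionSum s (n + 1) _ _ _ hx).deriv]
  unfold partialFractionSum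
  refine sum_congr rfl fun k _ => ?_
  push_cast; ring

lemma hasSum_zpow_neg_mul_partialFractionSum (s : Finset ℕ) (n ν : ℕ) (a b c : ℕ → ℝ) {z : ℝ}
    (hz : 1 < z) :
    HasSum (fun i : ℕ => z ^ (-((ν + 1 + i : ℕ) : ℤ)) *
        partialFractionSum s n a b c ((ν + 1 + i : ℕ) : ℝ))
      (∑ k ∈ s, z ^ k *
        (a k * (Li (n + 2) (1 / z) - ∑ t ∈ Icc 1 (k + ν), z ^ (-(t : ℤ)) * ((t : ℝ) ^ (n + 2))⁻¹)
        + b k * (Li (n + 1) (1 / z) - ∑ t ∈ Icc 1 (k + ν), z ^ (-(t : ℤ)) * ((t : ℝ) ^ (n + 1))⁻¹)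
        + c k * (Li n (1 / z) - ∑ t ∈ Icc 1 (k + ν), z ^ (-(t : ℤ)) * ((t : ℝ) ^ n)⁻¹))) := by
  simp only [partialFractionSum, mul_sum]
  refine hasSum_sum fun k _ => ?_
  have hsum (m : ℕ) := hasSum_zpow_neg_mul_inv_pow_add m ν k hz
  have h := (((hsum (n + 2)).mul_left (a k)).add ((hsum (n + 1)).mul_left (b k))).add
    ((hsum n).mul_left (c k))
  rw [mul_left_comm (a k), mul_left_comm (b k), mul_left_comm (c k), ← mul_add, ← mul_add] at h
  exact h.congr_fun fun i => by ring

theorem f6_star_formula_general (Δ ν : ℕ)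
    (R₀ : ℝ → ℝ)
    (α β γ : ℕ → ℝ)
    (hfrac : ∀ t : ℝ, (∀ k : ℕ, k ≤ ν * Δ → t ≠ -(k : ℝ)) →
      (R₀ t) ^ 3 = ∑ k ∈ Finset.range (ν * Δ + 1),
        (α k * ((t + (k : ℝ)) ^ 3)⁻¹ + β k * ((t + (k : ℝ)) ^ 2)⁻¹ + γ k * (t + (k : ℝ))⁻¹))
    (z : ℝ) (hz : 1 < z)
    (f₆ : ℝ) (hf₆ : f₆ = (1 / 2) * (-z) ^ ν *
      ∑' n : ℕ, z ^ (-((ν + 1 + n : ℕ) : ℤ)) *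
        deriv (deriv (fun s : ℝ => (R₀ s) ^ 3)) ((ν + 1 + n : ℕ) : ℝ)) :
    f₆ = 6 * ((-z) ^ ν * ∑ k ∈ Finset.range (ν * Δ + 1), α k * z ^ k) * Li 5 (1 / z) +
        3 * ((-z) ^ ν * ∑ k ∈ Finset.range (ν * Δ + 1), β k * z ^ k) * Li 4 (1 / z) +
        ((-z) ^ ν * ∑ k ∈ Finset.range (ν * Δ + 1), γ k * z ^ k) * Li 3 (1 / z) -
        (-z) ^ ν * ∑ k ∈ Finset.range (ν * Δ + 1), z ^ k *
          ∑ t ∈ Finset.Icc 1 (k + ν), z ^ (-(t : ℤ)) *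
            (6 * α k * ((t : ℝ) ^ 5)⁻¹ + 3 * β k * ((t : ℝ) ^ 4)⁻¹ + γ k * ((t : ℝ) ^ 3)⁻¹) := by
  set s := range (ν * Δ + 1)
  have hcube {x : ℝ} (hx : 0 < x) :
      (fun y => R₀ y ^ 3) =ᶠ[nhds x] partialFractionSum s 1 α β γ := by
    filter_upwards [Ioi_mem_nhds hx] with y hy
    rw [hfrac y fun k _ => by linarith [hy.out, (k.cast_nonneg : (0 : ℝ) ≤ k)]]
    simp [partialFractionSum]
  have hd (i : ℕ) : deriv (deriv fun y => R₀ y ^ 3) ((ν + 1 + i : ℕ) : ℝ) =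
      partialFractionSum s 3 (fun k => 12 * α k) (fun k => 6 * β k) (fun k => 2 * γ k)
        ((ν + 1 + i : ℕ) : ℝ) := by
    have hx : (0 : ℝ) < (ν + 1 + i : ℕ) := by positivity
    rw [(hcube hx).deriv.deriv_eq, deriv_deriv_partialFractionSum s 1 α β γ hx]
    norm_num
  simp only [hd] at hf₆
  rw [hf₆, (hasSum_zpow_neg_mul_partialFractionSum s 3 ν _ _ _ hz).tsum_eq]
  have hξ (k : ℕ) : ∑ t ∈ Icc 1 (k + ν), z ^ (-(t : ℤ)) *
      (6 * α k * ((t : ℝ) ^ 5)⁻¹ + 3 * β k * ((t : ℝ) ^ 4)⁻¹ + γ k * ((t : ℝ) ^ 3)⁻¹) =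
      6 * α k * ∑ t ∈ Icc 1 (k + ν), z ^ (-(t : ℤ)) * ((t : ℝ) ^ 5)⁻¹ +
      3 * β k * ∑ t ∈ Icc 1 (k + ν), z ^ (-(t : ℤ)) * ((t : ℝ) ^ 4)⁻¹ +
      γ k * ∑ t ∈ Icc 1 (k + ν), z ^ (-(t : ℤ)) * ((t : ℝ) ^ 3)⁻¹ := by
    simp only [mul_sum, ← sum_add_distrib]
    exact sum_congr rfl fun t _ => by ring
  simp only [hξ, mul_sum s, sum_mul s, ← sum_add_distrib,
    ← sum_sub_distrib]
  refine sum_congr rfl fun k _ => ?_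
  ring

/-- `f₆*(z,ν) = 6α* Li₅(1/z) + 3β* Li₄(1/z) + γ* Li₃(1/z) - ξ*`. -/
theorem f6_star_formula (Δ ν : ℕ) (hΔ : 1 < Δ) (hν : 1 ≤ ν)
    (R₀ : ℝ → ℝ)
    (hR : ∀ t : ℝ, R₀ t = ((ν * Δ).factorial : ℝ) / ((ν * Δ - ν).factorial : ℝ) *
      (∏ κ ∈ Finset.Icc (ν + 1) (ν * Δ), (t - (κ : ℝ))) *
      (∏ κ ∈ Finset.range (ν * Δ + 1), (t + (κ : ℝ))⁻¹))
    (α β γ : ℕ → ℝ)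
    (hfrac : ∀ t : ℝ, (∀ k : ℕ, k ≤ ν * Δ → t ≠ -(k : ℝ)) →
      (R₀ t) ^ 3 = ∑ k ∈ Finset.range (ν * Δ + 1),
        (α k * ((t + (k : ℝ)) ^ 3)⁻¹ + β k * ((t + (k : ℝ)) ^ 2)⁻¹ + γ k * (t + (k : ℝ))⁻¹))
    (z : ℝ) (hz : 1 < z)
    (f₆ : ℝ) (hf₆ : f₆ = (1 / 2) * (-z) ^ ν *
      ∑' n : ℕ, z ^ (-((ν + 1 + n : ℕ) : ℤ)) *
        deriv (deriv (fun s : ℝ => (R₀ s) ^ 3)) ((ν + 1 + n : ℕ) : ℝ)) :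
    f₆ = 6 * ((-z) ^ ν * ∑ k ∈ Finset.range (ν * Δ + 1), α k * z ^ k) * Li 5 (1 / z) +
        3 * ((-z) ^ ν * ∑ k ∈ Finset.range (ν * Δ + 1), β k * z ^ k) * Li 4 (1 / z) +
        ((-z) ^ ν * ∑ k ∈ Finset.range (ν * Δ + 1), γ k * z ^ k) * Li 3 (1 / z) -
        (-z) ^ ν * ∑ k ∈ Finset.range (ν * Δ + 1), z ^ k *
          ∑ t ∈ Finset.Icc 1 (k + ν), z ^ (-(t : ℤ)) *
            (6 * α k * ((t : ℝ) ^ 5)⁻¹ + 3 * β k * ((t : ℝ) ^ 4)⁻¹ + γ k * ((t : ℝ) ^ 3)⁻¹) :=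
  f6_star_formula_general Δ ν R₀ α β γ hfrac z hz f₆ hf₆
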